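/- arXiv:2109.06426 — 4 statements merged into one kernel-verified Lean document; each statement's English description precedes it below -/
import Mathlib

section
/- Let ι be a nonempty finite index set and let B : ι → Set ℝ² be a family of compact convex sets in the Euclidean plane with pairwise disjoint interiors. Then there exist an index i₀ and a continuous path γ : [0, ∞) → ℝ² with γ(0) = 0 and ‖γ(t)‖ → ∞ as t → ∞, such that for every t ≥ 0 and every j ≠ i₀ the interior of the translate γ(t) +ᵥ B i₀ is disjoint from B j; that is, among finitely many convex bodies in the plane with non-overlapping interiors there is always one that can be continuously moved to infinity while all the others stay motionless. -/
namespace ExtremeBodyAux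

open Set Filter

noncomputable section

abbrev E2 := EuclideanSpace ℝ (Fin 2)

def dvec : E2 := EuclideanSpace.single 1 1
def evec : E2 := EuclideanSpace.single 0 1

lemma le_on_of_lt_on_interior {K : Set E2} (hK : Convex ℝ K) {f : E2 →L[ℝ] ℝ} {u : ℝ}
    (h : ∀ a ∈ interior K, f a < u) {x : E2} (hx : x ∈ K) {p : E2} (hp : p ∈ interior K) :
    f x ≤ u := by
  by_contra hgt
  push_neg at hgt
  have key : ∀ t : ℝ, 0 < t → t ≤ 1 → f x + t * (f p - f x) < u := by
    intro t ht0 ht1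
    have := h _ (hK.add_smul_sub_mem_interior hx hp ⟨ht0, ht1⟩)
    simpa [map_add, map_smul, smul_eq_mul, mul_sub] using this
  have hb : f p - f x < 0 := by have := key 1 one_pos le_rfl; nlinarith
  have hbpos : (0:ℝ) < 2 * -(f p - f x) := by linarith
  set t0 : ℝ := min 1 ((f x - u) / (2 * -(f p - f x))) with ht0def
  have ht0pos : 0 < t0 := lt_min one_pos (div_pos (by linarith) hbpos)
  have h2 : t0 * (2 * -(f p - f x)) ≤ f x - u :=
    (le_div_iff₀ hbpos).1 (min_le_right _ _)
  have := key t0 ht0pos (min_le_left _ _)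
  nlinarith

lemma height_lt {K L : Set E2} (hKcv : Convex ℝ K) (hLcv : Convex ℝ L)
    (hKL : interior K ∩ interior L = ∅)
    {t : ℝ} (ht : 0 ≤ t) {p₀ : E2} (hp₀ : p₀ ∈ interior K) (hq₀ : p₀ + t • dvec ∈ L)
    {p q : E2} (hp : p ∈ interior K) (hq : q ∈ interior L) (hpq : p 0 = q 0) :
    p 1 < q 1 := by
  obtain ⟨f, u, hfK, hfL⟩ := geometric_hahn_banach_open_open hKcv.interior isOpen_interior
    hLcv.interior isOpen_interior (Set.disjoint_iff_inter_eq_empty.2 hKL)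
  have hLle : ∀ x ∈ L, u ≤ f x := by
    intro x hx
    have := le_on_of_lt_on_interior hLcv (f := -f) (u := -u)
      (fun a ha => by simpa using hfL a ha) hx hq
    simpa using this
  have hfd : 0 < f dvec := by
    have h1 : f p₀ < u := hfK _ hp₀
    have h2 : u ≤ f p₀ + t * f dvec := by
      have := hLle _ hq₀; simpa using this
    nlinarith
  have hqp : q = p + (q 1 - p 1) • dvec := by
    ext j; fin_cases j <;> simp [dvec, EuclideanSpace.single_apply, hpq]
  have h3 : f p < u := hfK _ hp
  have h4 : u < f q := hfL _ hq
  rw [hqp] at h4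
  simp only [map_add, map_smul, smul_eq_mul] at h4
  nlinarith

lemma mem_closure_interior_of_convex {L : Set E2} (hLcv : Convex ℝ L)
    (hL : (interior L).Nonempty) {x : E2} (hx : x ∈ L) :
    x ∈ closure (interior L) := by
  obtain ⟨w, hw⟩ := hL
  have htend : Tendsto (fun t : ℝ => x + t • (w - x)) (nhdsWithin 0 (Ioi 0)) (nhds x) := by
    have h : Continuous (fun t : ℝ => x + t • (w - x)) :=
      continuous_const.add (continuous_id.smul continuous_const)
    have := h.tendsto (0 : ℝ)
    simp only [zero_smul, add_zero] at this
    exact this.mono_left nhdsWithin_le_nhds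
  refine mem_closure_of_tendsto htend ?_
  filter_upwards [Ioc_mem_nhdsGT_of_mem (Set.left_mem_Ico.2 one_pos)] with t ht
  exact hLcv.add_smul_sub_mem_interior hx hw ht

lemma strip_open {K : Set E2} : IsOpen ((fun p : E2 => p 0) '' interior K) := by
  rw [Metric.isOpen_iff]
  rintro x ⟨p, hp, rfl⟩
  obtain ⟨ε, hε, hball⟩ := Metric.isOpen_iff.1 isOpen_interior p hp
  refine ⟨ε, hε, fun y hy => ?_⟩
  rw [Metric.mem_ball, Real.dist_eq] at hy
  refine ⟨p + (y - p 0) • evec, hball ?_, by simp [evec, EuclideanSpace.single_apply]⟩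
  rw [Metric.mem_ball, dist_eq_norm]
  have h : p + (y - p 0) • evec - p = (y - p 0) • evec := by abel
  rw [h, norm_smul]
  simpa [evec, EuclideanSpace.norm_single, Real.norm_eq_abs] using hy

lemma strip_convex {K : Set E2} (hK : Convex ℝ K) :
    Convex ℝ ((fun p : E2 => p 0) '' interior K) := by
  rintro x ⟨p, hp, rfl⟩ y ⟨q, hq, rfl⟩ a b ha hb hab
  exact ⟨a • p + b • q, hK.interior hp hq ha hb hab, by simp⟩

lemma strip_inter_nonempty {K L : Set E2} (hLcv : Convex ℝ L)
    {t : ℝ} {p : E2} (hp : p ∈ interior K) (hq : p + t • dvec ∈ L)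
    (hL : (interior L).Nonempty) :
    ((fun p : E2 => p 0) '' interior K ∩ (fun p : E2 => p 0) '' interior L).Nonempty := by
  have hmem : p 0 ∈ closure ((fun p : E2 => p 0) '' interior L) := by
    have h1 : p + t • dvec ∈ closure (interior L) := mem_closure_interior_of_convex hLcv hL hq
    have h2 : (fun p : E2 => p 0) (p + t • dvec) ∈ closure ((fun p : E2 => p 0) '' interior L) :=
      (image_closure_subset_closure_image (EuclideanSpace.proj (0 : Fin 2)).continuous) ⟨_, h1, rfl⟩
    simpa [dvec, EuclideanSpace.single_apply] using h2
  obtain ⟨z, hz1, hz2⟩ := mem_closure_iff.1 hmem _ strip_open ⟨p, hp, rfl⟩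
  exact ⟨z, hz1, hz2⟩

lemma strip_compare {K L : Set E2} {x : ℝ}
    (hx1 : x ∈ (fun p : E2 => p 0) '' interior K) (hx2 : x ∈ (fun p : E2 => p 0) '' interior L)
    (hdisj : interior K ∩ interior L = ∅) :
    (∃ t : ℝ, 0 ≤ t ∧ ∃ p ∈ interior K, p + t • dvec ∈ L) ∨
    (∃ t : ℝ, 0 ≤ t ∧ ∃ p ∈ interior L, p + t • dvec ∈ K) := by
  obtain ⟨p, hp, rfl⟩ := hx1
  obtain ⟨q, hq, hpq⟩ := hx2
  have hne : p 1 ≠ q 1 := by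
    intro h
    have : p = q := by ext j; fin_cases j <;> simp [hpq.symm, h]
    rw [this] at hp
    exact Set.eq_empty_iff_forall_notMem.1 hdisj q ⟨hp, hq⟩
  rcases lt_or_gt_of_ne hne with h | h
  · left
    refine ⟨q 1 - p 1, by linarith, p, hp, ?_⟩
    have : p + (q 1 - p 1) • dvec = q := by
      ext j; fin_cases j <;> simp [dvec, EuclideanSpace.single_apply, hpq.symm]
    rw [this]; exact interior_subset hq
  · right
    refine ⟨p 1 - q 1, by linarith, q, hq, ?_⟩
    have : q + (p 1 - q 1) • dvec = p := by
      ext j; fin_cases j <;> simp [dvec, EuclideanSpace.single_apply, hpq]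
    rw [this]; exact interior_subset hp

lemma median_mem {A B C : Set ℝ} (hA : A.OrdConnected) (hB : B.OrdConnected)
    (hC : C.OrdConnected) {a b c : ℝ}
    (ha : a ∈ A ∩ B) (hb : b ∈ B ∩ C) (hc : c ∈ C ∩ A) :
    ∃ x, x ∈ A ∧ x ∈ B ∧ x ∈ C := by
  rcases le_total a b with h1 | h1 <;> rcases le_total b c with h2 | h2 <;>
    rcases le_total a c with h3 | h3
  · exact ⟨b, hA.out ha.1 hc.2 ⟨h1, h2⟩, hb.1, hb.2⟩
  · exact ⟨b, hA.out ha.1 hc.2 ⟨h1, h2⟩, hb.1, hb.2⟩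
  · exact ⟨c, hc.2, hB.out ha.2 hb.1 ⟨h3, h2⟩, hc.1⟩
  · exact ⟨a, ha.1, ha.2, hC.out hc.1 hb.2 ⟨h3, h1⟩⟩
  · exact ⟨a, ha.1, ha.2, hC.out hb.2 hc.1 ⟨h1, h3⟩⟩
  · exact ⟨c, hc.2, hB.out hb.1 ha.2 ⟨h2, h3⟩, hc.1⟩
  · exact ⟨b, hA.out hc.2 ha.1 ⟨h2, h1⟩, hb.1, hb.2⟩
  · exact ⟨b, hA.out hc.2 ha.1 ⟨h2, h1⟩, hb.1, hb.2⟩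

lemma abstract_unblocked {ι : Type*} [Fintype ι] [Nonempty ι]
    (R : ι → ι → Prop) (J : ι → Set ℝ) (Y : ι → ℝ → ℝ)
    (h1 : ∀ i j, R i j → i ≠ j)
    (h2 : ∀ i j, R i j → (J i ∩ J j).Nonempty)
    (h3o : ∀ i, IsOpen (J i))
    (h3c : ∀ i, Convex ℝ (J i))
    (h4 : ∀ i j, i ≠ j → (J i ∩ J j).Nonempty → R i j ∨ R j i)
    (h5 : ∀ i j x, R i j → x ∈ J i → x ∈ J j → Y i x < Y j x) :
    ∃ i, ∀ j, ¬ R i j := by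
  classical
  by_contra hcon
  push_neg at hcon
  choose f hf using hcon
  have hex : ∃ m, 0 < m ∧ ∃ c : ℕ → ι, (∀ k < m, R (c k) (c (k+1))) ∧ c m = c 0 := by
    set x0 := Classical.arbitrary ι with hx0
    obtain ⟨a, b, hab, heq⟩ := Fintype.exists_ne_map_eq_of_card_lt
      (fun n : Fin (Fintype.card ι + 1) => f^[(n : ℕ)] x0) (by simp)
    have key : ∀ (a b : ℕ), a < b → f^[a] x0 = f^[b] x0 →
        ∃ m, 0 < m ∧ ∃ c : ℕ → ι, (∀ k < m, R (c k) (c (k+1))) ∧ c m = c 0 := by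
      intro a b hab heq
      refine ⟨b - a, by omega, fun k => f^[a+k] x0, fun k _ => ?_, ?_⟩
      · show R (f^[a+k] x0) (f^[a+(k+1)] x0)
        rw [show a+(k+1) = (a+k)+1 by ring, Function.iterate_succ_apply']
        exact hf _
      · show f^[a+(b-a)] x0 = f^[a+0] x0
        rw [show a+(b-a) = b by omega, Nat.add_zero, ← heq]
    rcases Nat.lt_or_ge (a : ℕ) (b : ℕ) with h | h
    · exact key a b h heq
    · have : (b : ℕ) < (a : ℕ) := by
        rcases Nat.lt_or_ge (b : ℕ) (a : ℕ) with h' | h'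
        · exact h'
        · exact absurd (Fin.ext (le_antisymm h' h)) hab
      exact key b a this heq.symm
  obtain ⟨m, ⟨hmpos, c, hedge, hclose⟩, hmmin⟩ :
      ∃ m, (0 < m ∧ ∃ c : ℕ → ι, (∀ k < m, R (c k) (c (k+1))) ∧ c m = c 0) ∧
        ∀ m' < m, ¬(0 < m' ∧ ∃ c' : ℕ → ι, (∀ k < m', R (c' k) (c' (k+1))) ∧ c' m' = c' 0) :=
    ⟨Nat.find hex, Nat.find_spec hex, fun m' h => Nat.find_min hex h⟩
  have false_of_walk : ∀ (m' : ℕ) (c' : ℕ → ι), 0 < m' → m' < m →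
      (∀ k < m', R (c' k) (c' (k+1))) → c' m' = c' 0 → False :=
    fun m' c' h0 hlt he hc => hmmin m' hlt ⟨h0, c', he, hc⟩
  by_cases hm4 : m < 4
  · have hm : m = 1 ∨ m = 2 ∨ m = 3 := by omega
    rcases hm with hm | hm | hm
    · rw [hm] at hclose
      have e0 := hedge 0 (by omega)
      rw [hclose] at e0
      exact h1 _ _ e0 rfl
    · rw [hm] at hclose
      have e0 := hedge 0 (by omega)
      have e1 := hedge 1 (by omega)
      rw [show (1:ℕ)+1 = 2 from rfl, hclose] at e1
      obtain ⟨x, hx0, hx1⟩ := h2 _ _ e0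
      have := h5 _ _ _ e0 hx0 hx1
      have := h5 _ _ _ e1 hx1 hx0
      linarith
    · rw [hm] at hclose
      have e0 := hedge 0 (by omega)
      have e1 := hedge 1 (by omega)
      have e2 := hedge 2 (by omega)
      rw [show (2:ℕ)+1 = 3 from rfl, hclose] at e2
      obtain ⟨x01, hx01⟩ := h2 _ _ e0
      obtain ⟨x12, hx12⟩ := h2 _ _ e1
      obtain ⟨x20, hx20⟩ := h2 _ _ e2
      obtain ⟨x, hxa, hxb, hxc⟩ := median_mem (h3c (c 0)).ordConnected
        (h3c (c 1)).ordConnected (h3c (c 2)).ordConnected hx01 hx12 hx20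
      have := h5 _ _ _ e0 hxa hxb
      have := h5 _ _ _ e1 hxb hxc
      have := h5 _ _ _ e2 hxc hxa
      linarith
  · push_neg at hm4
    have e0 := hedge 0 (by omega)
    have elast : R (c (m-1)) (c 0) := by
      have := hedge (m-1) (by omega)
      rwa [show m-1+1 = m by omega, hclose] at this
    obtain ⟨a, ha0, ha1⟩ := h2 _ _ e0
    obtain ⟨b, hb1, hb0⟩ := h2 _ _ elast
    have hWpre : ∀ n, 1 ≤ n → n ≤ m - 1 → IsPreconnected (⋃ k ∈ Finset.Icc 1 n, J (c k)) := by
      intro n hn1 hnm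
      induction n with
      | zero => omega
      | succ n ih =>
        rcases Nat.eq_or_lt_of_le hn1 with h | h
        · have hn0 : n = 0 := by omega
          subst hn0
          simp only [Finset.Icc_self, Finset.mem_singleton, Set.iUnion_iUnion_eq_left]
          exact (h3c _).isPreconnected
        · have hn : 1 ≤ n := by omega
          have hpre := ih hn (by omega)
          obtain ⟨z, hz1, hz2⟩ := h2 _ _ (hedge n (by omega))
          have hstep : Finset.Icc 1 (n+1) = insert (n+1) (Finset.Icc 1 n) := by
            ext k; simp only [Finset.mem_Icc, Finset.mem_insert]; omega
          rw [hstep, Finset.set_biUnion_insert]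
          exact IsPreconnected.union z hz2 (Set.mem_biUnion (Finset.mem_Icc.2 ⟨hn, le_rfl⟩) hz1)
            (h3c _).isPreconnected hpre
    have hIcc0 : Set.uIcc a b ⊆ J (c 0) := ((h3c (c 0)).ordConnected).uIcc_subset ha0 hb0
    have haW : a ∈ ⋃ k ∈ Finset.Icc 1 (m-1), J (c k) :=
      Set.mem_biUnion (Finset.mem_Icc.2 ⟨le_rfl, by omega⟩) ha1
    have hbW : b ∈ ⋃ k ∈ Finset.Icc 1 (m-1), J (c k) :=
      Set.mem_biUnion (Finset.mem_Icc.2 ⟨by omega, le_rfl⟩) hb1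
    have hIccW : Set.uIcc a b ⊆ ⋃ k ∈ Finset.Icc 1 (m-1), J (c k) :=
      ((hWpre (m-1) (by omega) le_rfl).ordConnected).uIcc_subset haW hbW
    by_cases hmid : ∃ k, 2 ≤ k ∧ k ≤ m - 2 ∧ ∃ x ∈ Set.uIcc a b, x ∈ J (c k)
    · obtain ⟨k, hk2, hkm, x, hxI, hxk⟩ := hmid
      have hx0 : x ∈ J (c 0) := hIcc0 hxI
      by_cases hceq : c 0 = c k
      · exact false_of_walk k c (by omega) (by omega)
          (fun l hl => hedge l (by omega)) hceq.symm
      · rcases h4 _ _ hceq ⟨x, hx0, hxk⟩ with hch | hch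
        · refine false_of_walk (m - k + 1) (fun l => if l = 0 then c 0 else c (k + l - 1))
            (by omega) (by omega) ?_ ?_
          · intro l hl
            by_cases hl0 : l = 0
            · subst hl0
              simp only [if_pos rfl, if_neg one_ne_zero]
              rw [show k+1-1 = k by omega]
              exact hch
            · simp only [if_neg hl0, if_neg (Nat.succ_ne_zero l)]
              have hh := hedge (k+l-1) (by omega)
              rwa [show k+l-1+1 = k+(l+1)-1 by omega] at hh
          · show (if m - k + 1 = 0 then c 0 else c (k + (m-k+1) - 1)) =
                (if (0:ℕ) = 0 then c 0 else c (k + 0 - 1))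
            rw [if_neg (by omega : ¬ (m - k + 1 = 0)), if_pos rfl,
              show k + (m-k+1) - 1 = m by omega, hclose]
        · refine false_of_walk (k+1) (fun l => if l ≤ k then c l else c 0)
            (by omega) (by omega) ?_ ?_
          · intro l hl
            by_cases hlk : l = k
            · subst hlk
              simp only [if_pos le_rfl, if_neg (by omega : ¬ (l+1 ≤ l))]
              exact hch
            · simp only [if_pos (by omega : l ≤ k), if_pos (by omega : l+1 ≤ k)]
              exact hedge l (by omega)
          · simp only [if_neg (by omega : ¬ (k+1 ≤ k)), if_pos (Nat.zero_le k)]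
    · push_neg at hmid
      have hsub : Set.uIcc a b ⊆ J (c 1) ∪ J (c (m-1)) := by
        intro x hx
        have hxW := hIccW hx
        rw [Set.mem_iUnion₂] at hxW
        obtain ⟨k, hk, hxk⟩ := hxW
        rw [Finset.mem_Icc] at hk
        by_cases hk1 : k = 1
        · subst hk1; exact Or.inl hxk
        · by_cases hkm : k = m - 1
          · subst hkm; exact Or.inr hxk
          · exact absurd hxk (hmid k (by omega) (by omega) x hx)
      obtain ⟨z, hzI, hz1, hzm⟩ : ∃ z, z ∈ Set.uIcc a b ∧ z ∈ J (c 1) ∧ z ∈ J (c (m-1)) := by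
        obtain ⟨z, hz⟩ := isPreconnected_uIcc (J (c 1)) (J (c (m-1))) (h3o _) (h3o _) hsub
          ⟨a, Set.left_mem_uIcc, ha1⟩ ⟨b, Set.right_mem_uIcc, hb1⟩
        exact ⟨z, hz.1, hz.2.1, hz.2.2⟩
      by_cases hceq : c 1 = c (m-1)
      · refine false_of_walk (m-2) (fun l => c (1 + l)) (by omega) (by omega) ?_ ?_
        · intro l hl
          have hh := hedge (1+l) (by omega)
          rwa [show 1+l+1 = 1+(l+1) by omega] at hh
        · show c (1 + (m-2)) = c (1 + 0)
          rw [show 1 + (m-2) = m-1 by omega, show (1:ℕ) + 0 = 1 from rfl]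
          exact hceq.symm
      · rcases h4 _ _ hceq ⟨z, hz1, hzm⟩ with hch | hch
        · refine false_of_walk 3
            (fun l => if l = 0 then c 1 else if l = 1 then c (m-1) else if l = 2 then c 0 else c 1)
            (by omega) (by omega) ?_ ?_
          · intro l hl
            interval_cases l
            · simpa using hch
            · simpa using elast
            · simpa using e0
          · simp
        · refine false_of_walk (m-1) (fun l => if l ≤ m-2 then c (1+l) else c 1)
            (by omega) (by omega) ?_ ?_
          · intro l hl
            by_cases hle : l = m-2
            · subst hle
              simp only [if_pos le_rfl, if_neg (by omega : ¬ (m-2+1 ≤ m-2))]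
              rw [show 1+(m-2) = m-1 by omega]
              exact hch
            · simp only [if_pos (by omega : l ≤ m-2), if_pos (by omega : l+1 ≤ m-2)]
              have hh := hedge (1+l) (by omega)
              rwa [show 1+l+1 = 1+(l+1) by omega] at hh
          · simp only [if_neg (by omega : ¬ (m-1 ≤ m-2)), if_pos (Nat.zero_le (m-2))]

end

end ExtremeBodyAux

open ExtremeBodyAux Set Filter in
/-- Among finitely many compact convex bodies in the plane with pairwise disjoint
interiors, some body can be moved continuously to infinity, its interior staying
disjoint from all the other bodies along the way. -/
theorem exists_extreme_convex_body_plane {ι : Type*} [Fintype ι] [Nonempty ι]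
    (B : ι → Set (EuclideanSpace ℝ (Fin 2)))
    (hcpt : ∀ i, IsCompact (B i)) (hconv : ∀ i, Convex ℝ (B i))
    (hdisj : ∀ i j, i ≠ j → interior (B i) ∩ interior (B j) = ∅) :
    ∃ (i₀ : ι) (γ : ℝ → EuclideanSpace ℝ (Fin 2)),
      ContinuousOn γ (Set.Ici 0) ∧ γ 0 = 0 ∧
      Filter.Tendsto (fun t => ‖γ t‖) Filter.atTop Filter.atTop ∧
      ∀ t : ℝ, 0 ≤ t → ∀ j, j ≠ i₀ →
        interior ((γ t + ·) '' B i₀) ∩ B j = ∅ := by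
  classical
  have hnorm : Filter.Tendsto (fun t : ℝ => ‖t • dvec‖) Filter.atTop Filter.atTop := by
    have h : (fun t : ℝ => ‖t • dvec‖) = fun t : ℝ => |t| := by
      funext t
      rw [norm_smul]
      simp [dvec, EuclideanSpace.norm_single, Real.norm_eq_abs]
    rw [h]
    exact tendsto_abs_atTop_atTop
  have hcont : ContinuousOn (fun t : ℝ => t • dvec) (Set.Ici 0) :=
    (continuous_id.smul continuous_const).continuousOn
  have himg : ∀ (v : EuclideanSpace ℝ (Fin 2)) (s : Set (EuclideanSpace ℝ (Fin 2))),
      interior ((v + ·) '' s) = (v + ·) '' interior s := by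
    intro v s
    have := (Homeomorph.addLeft v).image_interior s
    simpa [Homeomorph.coe_addLeft] using this.symm
  -- Main claim: there is an unblocked body
  have main : ∃ i₀ : ι, ∀ j, j ≠ i₀ → ∀ t : ℝ, 0 ≤ t →
      ∀ p ∈ interior (B i₀), p + t • dvec ∉ B j := by
    by_cases hem : ∃ i, interior (B i) = ∅
    · obtain ⟨i, hi⟩ := hem
      exact ⟨i, fun j _ t _ p hp => by rw [hi] at hp; exact absurd hp (Set.notMem_empty p)⟩
    · push_neg at hem
      have hne : ∀ i, (interior (B i)).Nonempty := hem
      set R : ι → ι → Prop :=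
        fun i j => i ≠ j ∧ ∃ t : ℝ, 0 ≤ t ∧ ∃ p ∈ interior (B i), p + t • dvec ∈ B j with hR
      set J : ι → Set ℝ := fun i => (fun p : E2 => p 0) '' interior (B i) with hJ
      set Y : ι → ℝ → ℝ := fun i x =>
        if hx : ∃ p : E2, p ∈ interior (B i) ∧ p 0 = x then hx.choose 1 else 0 with hY
      obtain ⟨i₀, hi₀⟩ := abstract_unblocked R J Y
        (fun i j hij => hij.1)
        (fun i j hij => by
          obtain ⟨hne', t, ht, p, hp, hq⟩ := hij
          exact strip_inter_nonempty (hconv j) hp hq (hne j))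
        (fun i => strip_open)
        (fun i => strip_convex (hconv i))
        (fun i j hij hx => by
          obtain ⟨x, hx1, hx2⟩ := hx
          rcases strip_compare hx1 hx2 (hdisj i j hij) with h | h
          · exact Or.inl ⟨hij, h⟩
          · exact Or.inr ⟨hij.symm, h⟩)
        (fun i j x hij hxi hxj => by
          obtain ⟨hne', t, ht, p₀, hp₀, hq₀⟩ := hij
          have hxi' : ∃ p : E2, p ∈ interior (B i) ∧ p 0 = x := by
            obtain ⟨p, hp, hpx⟩ := hxi; exact ⟨p, hp, hpx⟩
          have hxj' : ∃ p : E2, p ∈ interior (B j) ∧ p 0 = x := by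
            obtain ⟨p, hp, hpx⟩ := hxj; exact ⟨p, hp, hpx⟩
          simp only [hY, dif_pos hxi', dif_pos hxj']
          exact height_lt (hconv i) (hconv j) (hdisj i j hne') ht hp₀ hq₀
            hxi'.choose_spec.1 hxj'.choose_spec.1
            (by rw [hxi'.choose_spec.2, hxj'.choose_spec.2]))
      refine ⟨i₀, fun j hj t ht p hp hmem => ?_⟩
      exact hi₀ j ⟨Ne.symm hj, t, ht, p, hp, hmem⟩
  obtain ⟨i₀, hi₀⟩ := main
  refine ⟨i₀, fun t => t • dvec, hcont, by simp, hnorm, ?_⟩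
  intro t ht j hj
  rw [Set.eq_empty_iff_forall_notMem]
  rintro y ⟨hy1, hy2⟩
  rw [himg] at hy1
  obtain ⟨p, hp, rfl⟩ := hy1
  have hy2' : t • dvec + p ∈ B j := hy2
  rw [add_comm] at hy2'
  exact hi₀ j hj t ht p hp hy2'
end

section
/- The decahedra of the chain C_∞ have pairwise disjoint interiors: for all integers j, k ≥ 1 with j ≠ k, interior(D_j) ∩ interior(D_k) = ∅. -/
open Real

/-- The point `(x, y)` of the Euclidean plane. -/
noncomputable def pt2 (x y : ℝ) : EuclideanSpace ℝ (Fin 2) :=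
  (WithLp.equiv 2 (Fin 2 → ℝ)).symm ![x, y]

/-- The point `(x, y, z)` of Euclidean three-space. -/
noncomputable def pt3 (x y z : ℝ) : EuclideanSpace ℝ (Fin 3) :=
  (WithLp.equiv 2 (Fin 3 → ℝ)).symm ![x, y, z]

/-- The parity `r(k) = k mod 2`. -/
def par (k : ℕ) : ℕ := k % 2

/-- `Q a` is the regular pentagon (convex hull of its vertices) of circumradius 2
with vertex angles `(a + 2s)π/5`, `s = 0,…,4`. -/
noncomputable def Q (a : ℕ) : Set (EuclideanSpace ℝ (Fin 2)) :=
  convexHull ℝ {q | ∃ s : Fin 5,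
    q = pt2 (2 * cos (((a : ℝ) + 2 * (s : ℝ)) * π / 5))
            (2 * sin (((a : ℝ) + 2 * (s : ℝ)) * π / 5))}

/-- The 20-point vertex set of the `k`-th decahedron of the chain `C∞`. -/
noncomputable def V (k : ℕ) : Set (EuclideanSpace ℝ (Fin 3)) :=
  {p | ∃ s : Fin 5, ∃ t : Fin 4,
    p = pt3 (2 * cos (((par k : ℝ) + 2 * (s : ℝ)) * π / 5))
            (2 * sin (((par k : ℝ) + 2 * (s : ℝ)) * π / 5))
            (3 * ((k : ℝ) - 1) + (t : ℝ))}

/-- The `k`-th decahedron of the chain `C∞`. -/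
noncomputable def D (k : ℕ) : Set (EuclideanSpace ℝ (Fin 3)) :=
  convexHull ℝ (V k)

lemma z_lin : IsLinearMap ℝ (fun p : EuclideanSpace ℝ (Fin 3) => p 2) :=
  ⟨fun x y => rfl, fun c x => rfl⟩

lemma mem_D_z {k : ℕ} {p : EuclideanSpace ℝ (Fin 3)} (hp : p ∈ D k) :
    3 * ((k : ℝ) - 1) ≤ p 2 ∧ p 2 ≤ 3 * ((k : ℝ) - 1) + 3 := by
  have hsub : D k ⊆ {p : EuclideanSpace ℝ (Fin 3) |
      3 * ((k : ℝ) - 1) ≤ p 2 ∧ p 2 ≤ 3 * ((k : ℝ) - 1) + 3} := by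
    apply convexHull_min
    · rintro p ⟨s, t, rfl⟩
      have hz : (pt3 (2 * cos (((par k : ℝ) + 2 * (s : ℝ)) * π / 5))
            (2 * sin (((par k : ℝ) + 2 * (s : ℝ)) * π / 5))
            (3 * ((k : ℝ) - 1) + (t : ℝ))) 2 = 3 * ((k : ℝ) - 1) + (t : ℝ) := rfl
      refine ⟨?_, ?_⟩
      · show 3 * ((k : ℝ) - 1) ≤ 3 * ((k : ℝ) - 1) + (t : ℝ)
        have : (0:ℝ) ≤ (t : ℝ) := by positivity
        linarith
      · show 3 * ((k : ℝ) - 1) + (t : ℝ) ≤ 3 * ((k : ℝ) - 1) + 3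
        have ht : (t : ℝ) ≤ 3 := by
          have : (t : ℕ) ≤ 3 := Nat.lt_succ_iff.mp t.isLt
          exact_mod_cast this
        linarith
    · exact (convex_halfSpace_ge z_lin _).inter (convex_halfSpace_le z_lin _)
  exact hsub hp

lemma aux_disjoint (j k : ℕ) (hjk : j < k) :
    interior (D j) ∩ interior (D k) = ∅ := by
  ext x
  simp only [Set.mem_inter_iff, Set.mem_empty_iff_false, iff_false, not_and]
  intro hxj hxk
  obtain ⟨ε, hε, hball⟩ := Metric.isOpen_iff.mp isOpen_interior x hxj
  set y : EuclideanSpace ℝ (Fin 3) := x + (ε/2) • EuclideanSpace.single 2 (1:ℝ) with hy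
  have hymem : y ∈ D j := by
    apply interior_subset
    apply hball
    have : dist y x = ε/2 := by
      rw [dist_eq_norm]
      have : y - x = (ε/2) • EuclideanSpace.single 2 (1:ℝ) := by simp only [hy, add_sub_cancel_left]
      rw [this, norm_smul, EuclideanSpace.norm_single]
      simp [abs_of_pos hε]
    rw [Metric.mem_ball, this]
    linarith
  have hyz : y 2 = x 2 + ε/2 := by
    have h1 : y 2 = x 2 + (ε/2) * (EuclideanSpace.single 2 (1:ℝ)) 2 := rfl
    rw [h1, EuclideanSpace.single_apply]
    simp
  have h1 := (mem_D_z hymem).2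
  have h2 := (mem_D_z (interior_subset hxk)).1
  have hk' : (j : ℝ) + 1 ≤ (k : ℝ) := by exact_mod_cast hjk
  rw [hyz] at h1
  linarith

/-- Distinct decahedra of the chain `C∞` have disjoint interiors. -/
theorem chain_interiors_disjoint (j k : ℕ) (hj : 1 ≤ j) (hk : 1 ≤ k) (hjk : j ≠ k) :
    interior (D j) ∩ interior (D k) = ∅ := by
  rcases lt_or_gt_of_ne hjk with h | h
  · exact aux_disjoint j k h
  · rw [Set.inter_comm]; exact aux_disjoint k j h
end

section
/- For every integer k ≥ 1, consecutive decahedra of the chain C_∞ meet exactly in a planar decagonal region at height 3k: D_k ∩ D_{k+1} = {p ∈ ℝ³ : (p₁, p₂) ∈ Q_{r(k)} ∩ Q_{r(k+1)} and p₃ = 3k}. In particular D_k ∩ D_{k+1} is contained in the plane {p : p₃ = 3k} and is the intersection of two regular pentagons, one rotated from the other by π/5. -/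
open Real

/-- Projection of 3-space onto the horizontal plane, as a linear map. -/
noncomputable def projL : EuclideanSpace ℝ (Fin 3) →ₗ[ℝ] EuclideanSpace ℝ (Fin 2) where
  toFun p := pt2 (p 0) (p 1)
  map_add' _ _ := by ext i; fin_cases i <;> rfl
  map_smul' _ _ := by ext i; fin_cases i <;> rfl

/-- The height functional, as a linear map. -/
noncomputable def evalZ : EuclideanSpace ℝ (Fin 3) →ₗ[ℝ] ℝ where
  toFun p := p 2
  map_add' _ _ := rfl
  map_smul' _ _ := rfl

/-- Linear embedding of the plane at height `0`. -/
noncomputable def liftLin : EuclideanSpace ℝ (Fin 2) →ₗ[ℝ] EuclideanSpace ℝ (Fin 3) where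
  toFun q := pt3 (q 0) (q 1) 0
  map_add' a b := by ext i; fin_cases i <;> simp [pt3]
  map_smul' c a := by ext i; fin_cases i <;> simp [pt3]

/-- Affine embedding of the plane at height `h`. -/
noncomputable def lift (h : ℝ) : EuclideanSpace ℝ (Fin 2) →ᵃ[ℝ] EuclideanSpace ℝ (Fin 3) :=
  AffineMap.mk' (fun q => pt3 (q 0) (q 1) h) liftLin 0
    (by intro q; ext i; fin_cases i <;> simp [pt3, liftLin])

/-- Each decahedron lies in the prism over its pentagon between its two heights. -/
lemma D_subset (k : ℕ) :
    D k ⊆ (projL ⁻¹' Q (par k)) ∩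
      (evalZ ⁻¹' Set.Icc (3 * ((k : ℝ) - 1)) (3 * ((k : ℝ) - 1) + 3)) := by
  apply convexHull_min
  · rintro p ⟨s, t, rfl⟩
    constructor
    · exact subset_convexHull ℝ _ ⟨s, rfl⟩
    · have h0 : (0 : ℝ) ≤ (t : ℝ) := by positivity
      have h3 : (t : ℝ) ≤ 3 := by
        have := t.is_le
        exact_mod_cast Nat.cast_le.mpr this
      constructor
      · show 3 * ((k : ℝ) - 1) ≤ 3 * ((k : ℝ) - 1) + (t : ℝ); linarith
      · show 3 * ((k : ℝ) - 1) + (t : ℝ) ≤ 3 * ((k : ℝ) - 1) + 3; linarith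
  · exact ((convex_convexHull ℝ _).linear_preimage projL).inter
      ((convex_Icc _ _).linear_preimage evalZ)

/-- The pentagon at the appropriate height embeds into the decahedron. -/
lemma lift_mem_D (k : ℕ) (h : ℝ) (t : Fin 4) (ht : 3 * ((k : ℝ) - 1) + (t : ℝ) = h)
    (q : EuclideanSpace ℝ (Fin 2)) (hq : q ∈ Q (par k)) :
    pt3 (q 0) (q 1) h ∈ D k := by
  have : pt3 (q 0) (q 1) h = lift h q := rfl
  rw [this]
  have himg : lift h '' Q (par k) ⊆ D k := by
    rw [Q, AffineMap.image_convexHull]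
    apply convexHull_mono
    rintro p ⟨v, ⟨s, rfl⟩, rfl⟩
    exact ⟨s, t, by rw [← ht]; rfl⟩
  exact himg ⟨q, hq, rfl⟩

/-- Consecutive decahedra of the chain `C∞` meet exactly in the planar decagonal
region `(Q_{r(k)} ∩ Q_{r(k+1)}) × {3k}` at height `3k`. -/
theorem chain_consecutive_intersection (k : ℕ) (hk : 1 ≤ k) :
    D k ∩ D (k + 1) = {p : EuclideanSpace ℝ (Fin 3) |
      pt2 (p 0) (p 1) ∈ Q (par k) ∩ Q (par (k + 1)) ∧ p 2 = 3 * (k : ℝ)} := by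
  ext p
  constructor
  · rintro ⟨h1, h2⟩
    obtain ⟨hq1, _, hz1⟩ := D_subset k h1
    obtain ⟨hq2, hz2, _⟩ := D_subset (k + 1) h2
    refine ⟨⟨hq1, hq2⟩, ?_⟩
    have : ((k : ℝ) + 1 - 1) = (k : ℝ) := by ring
    rw [Nat.cast_add, Nat.cast_one, this] at hz2
    have : (p 2 : ℝ) = evalZ p := rfl
    rw [this]
    linarith
  · rintro ⟨⟨hq1, hq2⟩, hz⟩
    have hp : p = pt3 (p 0) (p 1) (3 * (k : ℝ)) := by
      ext i; fin_cases i
      · rfl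
      · rfl
      · exact hz
    constructor
    · rw [hp]
      refine lift_mem_D k (3 * (k : ℝ)) 3 ?_ _ hq1
      have h3n : ((3 : Fin 4) : ℕ) = 3 := rfl
      have h3 : (((3 : Fin 4) : ℕ) : ℝ) = 3 := by rw [h3n]; norm_num
      show 3 * ((k : ℝ) - 1) + (((3 : Fin 4) : ℕ) : ℝ) = 3 * (k : ℝ)
      rw [h3]; ring
    · rw [hp]
      refine lift_mem_D (k + 1) (3 * (k : ℝ)) 0 ?_ _ hq2
      have h0n : ((0 : Fin 4) : ℕ) = 0 := rfl
      have h0 : (((0 : Fin 4) : ℕ) : ℝ) = 0 := by rw [h0n]; norm_num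
      show 3 * (((k + 1 : ℕ) : ℝ) - 1) + (((0 : Fin 4) : ℕ) : ℝ) = 3 * (k : ℝ)
      rw [h0]; push_cast; ring
end

section
/- For every integer k ≥ 1, the contact region of consecutive decahedra of the chain C_∞ contains a full two-dimensional disk: {p ∈ ℝ³ : p₁² + p₂² ≤ (2cos(π/5))² and p₃ = 3k} ⊆ D_k ∩ D_{k+1}. In particular consecutive decahedra of the chain meet in a set with nonempty relative interior in the plane {p₃ = 3k}. -/
/-!
The vertices of `D k` are those of the regular pentagon `Q (par k)` of circumradius 2, repeated
at the heights `3 (k - 1) + t`, so `D k` contains the copy of `Q (par k)` at each of these heights.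
The plane `p₃ = 3k` carries the top copy for `D k` and the bottom copy for `D (k + 1)`, so it
suffices that the inscribed disk, of radius `2 cos (π / 5)`, lies in every pentagon `Q a`. By
Hahn–Banach this means that every linear functional is at least as large at some vertex as on
the disk; the vertex whose direction is within `π / 5` of the functional's gradient works.
-/

open Real

theorem mem_convexHull_of_forall_exists_le {E : Type*} [TopologicalSpace E] [AddCommGroup E]
    [Module ℝ E] [IsTopologicalAddGroup E] [ContinuousSMul ℝ E] [LocallyConvexSpace ℝ E]
    [T2Space E] {s : Set E} (hs : s.Finite) {x : E}
    (h : ∀ l : StrongDual ℝ E, ∃ y ∈ s, l x ≤ l y) : x ∈ convexHull ℝ s := by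
  rw [← iInter_halfSpaces_eq (convex_convexHull ℝ s) (hs.isClosed_convexHull ℝ), Set.mem_iInter]
  intro l
  obtain ⟨y, hy, hxy⟩ := h l
  exact ⟨y, subset_convexHull ℝ s hy, hxy⟩

/-- Rounding `(n u / π - a) / 2` to an integer `m` and reducing it mod `n` picks the vertex. -/
lemma exists_cos_pi_div_le_cos_sub {n : ℕ} (hn : 0 < n) (a u : ℝ) :
    ∃ s : Fin n, cos (π / n) ≤ cos ((a + 2 * s) * π / n - u) := by
  have hn' : (0 : ℝ) < n := Nat.cast_pos.mpr hn
  set z : ℝ := (n * u / π - a) / 2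
  set m : ℤ := round z
  have hmod_nonneg : 0 ≤ m % n := Int.emod_nonneg m (by omega)
  have hmod_lt : m % n < n := Int.emod_lt_of_pos m (by omega)
  refine ⟨⟨(m % n).toNat, by omega⟩, ?_⟩
  have hs : (((m % n).toNat : ℕ) : ℝ) = m - n * ((m / n : ℤ) : ℝ) := by
    rw [← Int.cast_natCast, Int.toNat_of_nonneg hmod_nonneg, Int.emod_def]
    push_cast; ring
  have hshift : (a + 2 * (((m % n).toNat : ℕ) : ℝ)) * π / n - u
      = ((a + 2 * m) * π / n - u) - (m / n : ℤ) * (2 * π) := by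
    rw [hs]; field_simp; ring
  have hclose : |(a + 2 * m) * π / n - u| ≤ π / n := by
    have hw : (a + 2 * m) * π / n - u = (2 * π / n) * (m - z) := by
      simp only [z]; field_simp; ring
    rw [hw, abs_mul, abs_of_pos (by positivity), abs_sub_comm]
    calc 2 * π / n * |z - m| ≤ 2 * π / n * (1 / 2) := by gcongr; exact abs_sub_round z
      _ = π / n := by ring
  rw [hshift, cos_sub_int_mul_two_pi, ← cos_abs ((a + 2 * m) * π / n - u)]
  exact cos_le_cos_of_nonneg_of_le_pi (abs_nonneg _)
    (div_le_self pi_pos.le (by exact_mod_cast hn)) hclose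

lemma mul_cos_add_mul_sin_eq_norm_mul_cos_sub_arg (y₀ y₁ θ : ℝ) :
    y₀ * cos θ + y₁ * sin θ = ‖(⟨y₀, y₁⟩ : ℂ)‖ * cos (θ - Complex.arg ⟨y₀, y₁⟩) := by
  have hre := Complex.norm_mul_cos_arg ⟨y₀, y₁⟩
  have him := Complex.norm_mul_sin_arg ⟨y₀, y₁⟩
  rw [cos_sub]
  linear_combination (-cos θ) * hre - sin θ * him

lemma exists_vertex_mul_add_mul_ge {n : ℕ} (hn : 2 ≤ n) {R : ℝ} (hR : 0 ≤ R)
    (a y₀ y₁ p₀ p₁ : ℝ) (hp : p₀ ^ 2 + p₁ ^ 2 ≤ (R * cos (π / n)) ^ 2) :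
    ∃ s : Fin n, y₀ * p₀ + y₁ * p₁ ≤
      y₀ * (R * cos ((a + 2 * s) * π / n)) + y₁ * (R * sin ((a + 2 * s) * π / n)) := by
  set z : ℂ := ⟨y₀, y₁⟩
  have hcos_nonneg : 0 ≤ cos (π / n) := by
    apply cos_nonneg_of_mem_Icc
    constructor
    · linarith [show 0 ≤ π / n by positivity, pi_pos]
    · rw [div_le_div_iff_of_pos_left pi_pos (by positivity) (by norm_num)]
      exact_mod_cast (by omega : 2 ≤ n)
  obtain ⟨s, hs⟩ := exists_cos_pi_div_le_cos_sub (by omega : 0 < n) a (Complex.arg z)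
  refine ⟨s, ?_⟩
  have hnorm_sq : ‖z‖ ^ 2 = y₀ ^ 2 + y₁ ^ 2 := by
    rw [Complex.sq_norm, Complex.normSq_mk]; ring
  have hcauchy_schwarz : y₀ * p₀ + y₁ * p₁ ≤ ‖z‖ * (R * cos (π / n)) := by
    refine le_of_sq_le_sq ?_ (by positivity)
    nlinarith [sq_nonneg (y₀ * p₁ - y₁ * p₀), sq_nonneg y₀, sq_nonneg y₁]
  calc y₀ * p₀ + y₁ * p₁ ≤ ‖z‖ * (R * cos (π / n)) := hcauchy_schwarz
    _ ≤ R * (‖z‖ * cos ((a + 2 * s) * π / n - Complex.arg z)) := by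
      nlinarith [norm_nonneg z, mul_nonneg hR (norm_nonneg z)]
    _ = _ := by rw [← mul_cos_add_mul_sin_eq_norm_mul_cos_sub_arg]; ring

lemma pt2_eq_smul_add_smul (x y : ℝ) : pt2 x y = x • pt2 1 0 + y • pt2 0 1 := by
  ext i
  fin_cases i <;> simp [pt2]

lemma pt3_eta (p : EuclideanSpace ℝ (Fin 3)) : pt3 (p 0) (p 1) (p 2) = p := by
  ext i
  fin_cases i <;> rfl

theorem pt2_mem_Q_of_sq_add_sq_le (a : ℕ) {x y : ℝ}
    (h : x ^ 2 + y ^ 2 ≤ (2 * cos (π / 5)) ^ 2) : pt2 x y ∈ Q a := by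
  let vertex (s : Fin 5) : EuclideanSpace ℝ (Fin 2) :=
    pt2 (2 * cos (((a : ℝ) + 2 * (s : ℝ)) * π / 5)) (2 * sin (((a : ℝ) + 2 * (s : ℝ)) * π / 5))
  have hfinite : {q | ∃ s : Fin 5, q = vertex s}.Finite :=
    (Set.finite_range vertex).subset fun q ⟨s, hs⟩ => ⟨s, hs.symm⟩
  refine mem_convexHull_of_forall_exists_le hfinite fun l => ?_
  obtain ⟨s, hs⟩ := exists_vertex_mul_add_mul_ge (n := 5) (by norm_num) (R := 2) (by norm_num)
    a (l (pt2 1 0)) (l (pt2 0 1)) x y (by exact_mod_cast h)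
  refine ⟨vertex s, ⟨s, rfl⟩, ?_⟩
  simp only [vertex]
  rw [pt2_eq_smul_add_smul x y, pt2_eq_smul_add_smul (2 * cos _)]
  simp only [map_add, map_smul, smul_eq_mul]
  push_cast at hs
  linarith

noncomputable def liftToHeight (h : ℝ) :
    EuclideanSpace ℝ (Fin 2) →ᵃ[ℝ] EuclideanSpace ℝ (Fin 3) where
  toFun q := pt3 (q 0) (q 1) h
  linear :=
    { toFun := fun q => pt3 (q 0) (q 1) 0
      map_add' := fun q q' => by ext i; fin_cases i <;> simp [pt3]
      map_smul' := fun c q => by ext i; fin_cases i <;> simp [pt3] }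
  map_vadd' q v := by ext i; fin_cases i <;> simp [pt3]

lemma liftToHeight_pt2 (h x y : ℝ) : liftToHeight h (pt2 x y) = pt3 x y h := by
  simp [liftToHeight, pt2]

theorem pt3_mem_D_of_pt2_mem_Q (m : ℕ) (t : Fin 4) {x y : ℝ} (hxy : pt2 x y ∈ Q (par m)) :
    pt3 x y (3 * ((m : ℝ) - 1) + t) ∈ D m := by
  rw [← liftToHeight_pt2]
  refine convexHull_mono ?_ ((liftToHeight _).image_convexHull _ ▸ Set.mem_image_of_mem _ hxy)
  rintro _ ⟨_, ⟨s, rfl⟩, rfl⟩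
  exact ⟨s, t, liftToHeight_pt2 _ _ _⟩

theorem chain_contact_contains_disk_general (k : ℕ) :
    {p : EuclideanSpace ℝ (Fin 3) |
        (p 0) ^ 2 + (p 1) ^ 2 ≤ (2 * cos (π / 5)) ^ 2 ∧ p 2 = 3 * (k : ℝ)} ⊆
      D k ∩ D (k + 1) := by
  rintro p ⟨hdisk, hheight⟩
  have hQ (a : ℕ) := pt2_mem_Q_of_sq_add_sq_le a hdisk
  rw [← pt3_eta p, hheight]
  constructor
  · convert pt3_mem_D_of_pt2_mem_Q k 3 (hQ _) using 2
    norm_num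
    ring
  · convert pt3_mem_D_of_pt2_mem_Q (k + 1) 0 (hQ _) using 2
    norm_num

/-- Consecutive decahedra of the chain `C∞` meet in a full two-dimensional
disk of radius `2 cos (π/5)` at height `3k`. -/
theorem chain_contact_contains_disk (k : ℕ) (hk : 1 ≤ k) :
    {p : EuclideanSpace ℝ (Fin 3) |
        (p 0) ^ 2 + (p 1) ^ 2 ≤ (2 * cos (π / 5)) ^ 2 ∧ p 2 = 3 * (k : ℝ)} ⊆
      D k ∩ D (k + 1) :=
  chain_contact_contains_disk_general k
end
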